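/- arXiv:1705.03714 — 2 statements merged into one kernel-verified Lean document; each statement's English description precedes it below -/
import Mathlib

section
/- If a random variable H ≥ 0 satisfies P(H > r) = O(r^{-θ'}) for some θ' > 0, and C = W·log₂(1 + γ·H²) with W, γ > 0, then C is light-tailed: there exists θ > 0 with P(C > x) = O(e^{-θx}) as x → ∞. -/
/-!
If `W log₂ (1 + γ h²) > x` with `x ≥ W`, then `γ h² > 2^{x/W} - 1 ≥ 2^{x/W} / 2`, so
`h > 2^{x/(2W)} / √(2γ)`: a large capacity forces an exponentially large envelope. Feeding this
exponential threshold into the polynomial tail `P(H > r) ≤ M r^{-θ'}` yields an exponential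
tail for `C` with rate `θ = θ' log 2 / (2W)`.
-/

open MeasureTheory Filter Real

theorem eventually_measure_gt_mul_exp_le {Ω : Type*} [MeasurableSpace Ω] (μ : Measure Ω)
    (H : Ω → ℝ) {M c κ θ' : ℝ} (hc : 0 < c) (hκ : 0 < κ)
    (htail : ∀ᶠ r in atTop, (μ {ω | H ω > r}).toReal ≤ M * r ^ (-θ')) :
    ∀ᶠ x in atTop, (μ {ω | H ω > c * exp (κ * x)}).toReal ≤
      M * c ^ (-θ') * exp (-(θ' * κ) * x) := by
  have hthreshold : Tendsto (fun x => c * exp (κ * x)) atTop atTop :=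
    (tendsto_exp_atTop.comp (tendsto_id.const_mul_atTop hκ)).const_mul_atTop hc
  filter_upwards [hthreshold.eventually htail] with x hx
  have hpow : (c * exp (κ * x)) ^ (-θ') = c ^ (-θ') * exp (-(θ' * κ) * x) := by
    rw [mul_rpow hc.le (exp_pos _).le, ← exp_mul]
    congr 2
    ring
  rwa [hpow, ← mul_assoc] at hx

theorem lt_of_lt_mul_logb_one_add_mul_sq {W γ h x : ℝ} (hW : 0 < W) (hγ : 0 < γ) (hh : 0 ≤ h)
    (hx : W ≤ x) (hcap : x < W * logb 2 (1 + γ * h ^ 2)) :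
    (√(2 * γ))⁻¹ * exp (log 2 / (2 * W) * x) < h := by
  set E := exp (log 2 * (x / W)) with hE
  have hE_lt : E < 1 + γ * h ^ 2 := by
    rw [hE, ← rpow_def_of_pos two_pos, ← lt_logb_iff_rpow_lt one_lt_two (by positivity),
      div_lt_iff₀' hW]
    exact hcap
  have two_le_E : 2 ≤ E := by
    calc (2 : ℝ) = exp (log 2 * 1) := by rw [mul_one, exp_log two_pos]
      _ ≤ E := exp_le_exp.2 <|
        mul_le_mul_of_nonneg_left ((one_le_div hW).2 hx) (log_nonneg one_le_two)
  have hsq : ((√(2 * γ))⁻¹ * exp (log 2 / (2 * W) * x)) ^ 2 = E / (2 * γ) := by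
    rw [mul_pow, inv_pow, sq_sqrt (by positivity), ← exp_nat_mul, hE]
    field_simp
    ring_nf
  refine lt_of_pow_lt_pow_left₀ 2 hh ?_
  rw [hsq, div_lt_iff₀ (by positivity)]
  nlinarith

/-- If a nonnegative random variable `H` has a tail `P(H > r) = O(r ^ (-θ'))` for some
`θ' > 0` (i.e. its distribution is not heavier than fat-tailed), then the instantaneous
capacity `C = W * log₂ (1 + γ * H ^ 2)` is light-tailed: there exist `θ > 0` and `a`
such that `P(C > x) ≤ a * exp (-θ * x)` for all sufficiently large `x`. -/
theorem instantaneous_capacity_light_tailed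
    {Ω : Type*} [MeasurableSpace Ω] (μ : Measure Ω) [IsProbabilityMeasure μ]
    (H : Ω → ℝ) (hH : ∀ ω, 0 ≤ H ω)
    (W γ : ℝ) (hW : 0 < W) (hγ : 0 < γ)
    (C : Ω → ℝ) (hC : ∀ ω, C ω = W * Real.logb 2 (1 + γ * H ω ^ 2))
    (θ' : ℝ) (hθ' : 0 < θ')
    (htail : ∃ M : ℝ, ∀ᶠ r in atTop, (μ {ω | H ω > r}).toReal ≤ M * r ^ (-θ')) :
    ∃ θ > (0 : ℝ), ∃ a : ℝ,
      ∀ᶠ x in atTop, (μ {ω | C ω > x}).toReal ≤ a * Real.exp (-θ * x) := by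
  obtain ⟨M, hM⟩ := htail
  have hκ : 0 < log 2 / (2 * W) := div_pos (log_pos one_lt_two) (by positivity)
  have hc : 0 < (√(2 * γ))⁻¹ := by positivity
  refine ⟨θ' * (log 2 / (2 * W)), mul_pos hθ' hκ, M * (√(2 * γ))⁻¹ ^ (-θ'), ?_⟩
  filter_upwards [eventually_measure_gt_mul_exp_le μ H hc hκ hM, eventually_ge_atTop W]
    with x hHtail hxW
  refine le_trans (ENNReal.toReal_mono (measure_ne_top _ _) (measure_mono fun ω hω => ?_)) hHtail
  rw [Set.mem_ofPred_eq, hC] at hω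
  exact lt_of_lt_mul_logb_one_add_mul_sq hW hγ (hH ω) hxW hω
end

section
/- If X₁, …, X_t are nonnegative random variables (not necessarily independent) with exponentially bounded tails P(X_k > x) ≤ a_k e^{-b_k x} for all x ≥ 0 (a_k ≥ 1, b_k > 0), then their sum S = X₁ + ⋯ + X_t satisfies P(S > x) ≤ (∏_{k=1}^t (a_k b_k w)^{1/(b_k w)})·e^{-x/w} for all x ≥ 0, where w = ∑_{k=1}^t 1/b_k. -/
/-!
If `∑ k, c k = x`, then `∑ k, X k > x` forces `X k > c k` for some `k`, so the union bound gives
`P(∑ k, X k > x) ≤ ∑ k, a k * exp (-b k * c k)` for every splitting of `x`, whatever the joint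
law of the `X k`. Choosing the splitting that makes `a k * exp (-b k * c k)` proportional to the
weight `1 / (b k * w)` (these weights sum to `1`) turns the right-hand side into
`(∏ k, (a k * b k * w) ^ (1 / (b k * w))) * exp (-x / w)`; by weighted AM-GM this splitting is
in fact optimal.
-/

open MeasureTheory Real Finset

section Splitting

variable {ι : Type*} [Fintype ι]

theorem sum_one_div_mul_sum_one_div [Nonempty ι] {b : ι → ℝ} (hb : ∀ k, 0 < b k) :
    ∑ k, 1 / (b k * ∑ j, 1 / b j) = 1 := by
  have hw : 0 < ∑ j, 1 / b j := sum_pos (fun j _ => one_div_pos.mpr (hb j)) univ_nonempty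
  simp_rw [← div_div, ← sum_div]
  exact div_self hw.ne'

theorem exists_sum_eq_sum_mul_exp_eq [Nonempty ι] {a b : ι → ℝ} (ha : ∀ k, 0 < a k)
    (hb : ∀ k, 0 < b k) (x : ℝ) :
    ∃ c : ι → ℝ, ∑ k, c k = x ∧
      ∑ k, a k * exp (-b k * c k) =
        (∏ k, (a k * b k * (∑ j, 1 / b j)) ^ ((1 : ℝ) / (b k * (∑ j, 1 / b j)))) *
          exp (-x / (∑ j, 1 / b j)) := by
  set w := ∑ j, 1 / b j with hw_def
  have hw : 0 < w := sum_pos (fun j _ => one_div_pos.mpr (hb j)) univ_nonempty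
  have hweights := sum_one_div_mul_sum_one_div hb
  rw [← hw_def] at hweights
  have hA : ∀ k, 0 < a k * b k * w := fun k => by have := ha k; have := hb k; positivity
  set L := ∑ k, 1 / (b k * w) * log (a k * b k * w)
  have hK : ∏ k, (a k * b k * w) ^ ((1 : ℝ) / (b k * w)) = exp L := by
    simp_rw [rpow_def_of_pos (hA _), ← exp_sum, mul_comm (log _)]
    rfl
  refine ⟨fun k => (x / w + log (a k * b k * w) - L) / b k, ?_, ?_⟩
  · have hLw : L * w = ∑ k, log (a k * b k * w) / b k := by
      rw [sum_mul]
      refine sum_congr rfl fun k _ => ?_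
      have := (hb k).ne'
      field_simp
    have hsplit : ∀ k, (x / w + log (a k * b k * w) - L) / b k =
        (x / w - L) * (1 / b k) + log (a k * b k * w) / b k := fun k => by ring
    simp_rw [hsplit, sum_add_distrib, ← mul_sum, ← hw_def, ← hLw]
    field_simp
    ring
  · have hterm : ∀ k, a k * exp (-b k * ((x / w + log (a k * b k * w) - L) / b k)) =
        1 / (b k * w) * (exp L * exp (-x / w)) := by
      intro k
      have hbk := (hb k).ne'
      have hak := (ha k).ne'
      rw [show -b k * ((x / w + log (a k * b k * w) - L) / b k) =
          -x / w + (L - log (a k * b k * w)) by field_simp; ring,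
        exp_add, exp_sub, exp_log (hA k)]
      field_simp
    simp_rw [hterm, ← sum_mul, hweights, one_mul, hK]

end Splitting

section Tails

variable {Ω : Type*} [MeasurableSpace Ω] {μ : Measure Ω}

theorem measureReal_sum_gt_le_sum [IsFiniteMeasure μ] {ι : Type*} [Fintype ι]
    (X : ι → Ω → ℝ) (c : ι → ℝ) :
    μ.real {ω | ∑ k, X k ω > ∑ k, c k} ≤ ∑ k, μ.real {ω | X k ω > c k} := by
  have hsub : {ω | ∑ k, X k ω > ∑ k, c k} ⊆ ⋃ k, {ω | X k ω > c k} := by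
    intro ω (hω : ∑ k, c k < ∑ k, X k ω)
    obtain ⟨k, -, hk⟩ := exists_lt_of_sum_lt hω
    exact Set.mem_iUnion.mpr ⟨k, hk⟩
  exact (measureReal_mono hsub).trans (measureReal_iUnion_fintype_le _)

theorem measureReal_gt_le_mul_exp [IsProbabilityMeasure μ] (f : Ω → ℝ) {a b : ℝ}
    (ha : 1 ≤ a) (hb : 0 ≤ b)
    (htail : ∀ x : ℝ, 0 ≤ x → μ.real {ω | f ω > x} ≤ a * exp (-b * x)) (c : ℝ) :
    μ.real {ω | f ω > c} ≤ a * exp (-b * c) := by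
  rcases le_or_gt 0 c with hc | hc
  · exact htail c hc
  · calc μ.real {ω | f ω > c} ≤ 1 := measureReal_le_one
      _ ≤ a := ha
      _ ≤ a * exp (-b * c) :=
        le_mul_of_one_le_right (by linarith) (one_le_exp (by nlinarith))

end Tails

theorem sum_exponential_tail_bound_general
    {Ω : Type*} [MeasurableSpace Ω] (μ : Measure Ω) [IsProbabilityMeasure μ]
    (t : ℕ) (ht : 0 < t) (X : Fin t → Ω → ℝ)
    (a b : Fin t → ℝ) (ha : ∀ k, 1 ≤ a k) (hb : ∀ k, 0 < b k)
    (htail : ∀ k, ∀ x : ℝ, 0 ≤ x →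
      (μ {ω | X k ω > x}).toReal ≤ a k * Real.exp (-(b k) * x)) :
    ∀ x : ℝ, 0 ≤ x →
      (μ {ω | ∑ k, X k ω > x}).toReal ≤
        (∏ k, (a k * b k * (∑ j, 1 / b j)) ^ ((1 : ℝ) / (b k * (∑ j, 1 / b j)))) *
          Real.exp (-x / (∑ j, 1 / b j)) := by
  intro x _
  have : Nonempty (Fin t) := Fin.pos_iff_nonempty.mp ht
  obtain ⟨c, rfl, hc⟩ :=
    exists_sum_eq_sum_mul_exp_eq (fun k => one_pos.trans_le (ha k)) hb x
  calc μ.real {ω | ∑ k, X k ω > ∑ k, c k}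
      ≤ ∑ k, μ.real {ω | X k ω > c k} := measureReal_sum_gt_le_sum X c
    _ ≤ ∑ k, a k * exp (-b k * c k) := sum_le_sum fun k _ =>
        measureReal_gt_le_mul_exp (X k) (ha k) (hb k).le (htail k) (c k)
    _ = _ := hc

/-- Sum of (possibly dependent) nonnegative random variables with exponentially bounded
tails `P(X k > x) ≤ a k * exp (-b k * x)` (with `a k ≥ 1`, `b k > 0`) satisfies
`P(∑ X k > x) ≤ (∏ k, (a k * b k * w) ^ (1 / (b k * w))) * exp (-x / w)` where
`w = ∑ k, 1 / b k`. -/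
theorem sum_exponential_tail_bound
    {Ω : Type*} [MeasurableSpace Ω] (μ : Measure Ω) [IsProbabilityMeasure μ]
    (t : ℕ) (ht : 0 < t) (X : Fin t → Ω → ℝ)
    (hXnn : ∀ k ω, 0 ≤ X k ω)
    (a b : Fin t → ℝ) (ha : ∀ k, 1 ≤ a k) (hb : ∀ k, 0 < b k)
    (htail : ∀ k, ∀ x : ℝ, 0 ≤ x →
      (μ {ω | X k ω > x}).toReal ≤ a k * Real.exp (-(b k) * x)) :
    ∀ x : ℝ, 0 ≤ x →
      (μ {ω | ∑ k, X k ω > x}).toReal ≤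
        (∏ k, (a k * b k * (∑ j, 1 / b j)) ^ ((1 : ℝ) / (b k * (∑ j, 1 / b j)))) *
          Real.exp (-x / (∑ j, 1 / b j)) :=
  sum_exponential_tail_bound_general μ t ht X a b ha hb htail
end
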